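/- arXiv:2502.09777 — 5 statements merged into one kernel-verified Lean document; each statement's English description precedes it below -/
import Mathlib

section
/- For any monotone normalized valuation function v on subsets of a finite set M of goods, there exists a partition of M into two bundles (P1, P2) such that for each bundle Pk and each good g in the other bundle P(3-k), v(Pk) ≥ v(P(3-k) \ {g}). (Existence of an EFX-cut into two bundles for a single agent.) -/
/-- Existence of an EFX-cut into two bundles for a single agent with a
monotone normalized valuation over a finite set of goods. -/
theorem efx_cut_exists {M : Type*} [Fintype M] [DecidableEq M]
    (v : Finset M → ℝ)
    (mono : ∀ S T : Finset M, S ⊆ T → v S ≤ v T)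
    (norm : v ∅ = 0) :
    ∃ P1 P2 : Finset M, Disjoint P1 P2 ∧ P1 ∪ P2 = Finset.univ ∧
      (∀ g ∈ P2, v P1 ≥ v (P2.erase g)) ∧
      (∀ g ∈ P1, v P2 ≥ v (P1.erase g)) := by
  classical
  set F : Finset (Finset M) := Finset.univ.filter (fun S => v S ≤ v Sᶜ) with hF
  have hne : F.Nonempty := by
    refine ⟨∅, ?_⟩
    simp only [hF, Finset.mem_filter, Finset.mem_univ, true_and, Finset.compl_empty]
    rw [norm]
    calc (0:ℝ) = v ∅ := norm.symm
    _ ≤ v Finset.univ := mono _ _ (Finset.empty_subset _)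
  obtain ⟨S0, hS0F, hS0max⟩ := F.exists_max_image v hne
  set F' : Finset (Finset M) := F.filter (fun S => v S0 ≤ v S) with hF'
  have hne' : F'.Nonempty := ⟨S0, by simp [hF', hS0F]⟩
  obtain ⟨S, hSF', hScard⟩ := F'.exists_max_image (fun S => S.card) hne'
  rw [hF', Finset.mem_filter] at hSF'
  obtain ⟨hSF, hvS0S⟩ := hSF'
  have hvSS0 : v S ≤ v S0 := hS0max S hSF
  have hvS : v S = v S0 := le_antisymm hvSS0 hvS0S
  have hSle : v S ≤ v Sᶜ := by
    rw [hF, Finset.mem_filter] at hSF; exact hSF.2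
  refine ⟨S, Sᶜ, disjoint_compl_right, Finset.union_compl _, ?_, ?_⟩
  · intro g hg
    by_contra hcon
    push_neg at hcon
    have hgS : g ∉ S := Finset.mem_compl.mp hg
    set A : Finset M := insert g S with hA
    have hAc : Aᶜ = Sᶜ.erase g := by rw [hA, Finset.compl_insert]
    have hSA : v S ≤ v A := mono _ _ (Finset.subset_insert _ _)
    by_cases hcase : v A ≤ v Aᶜ
    · have hAF : A ∈ F := by
        rw [hF, Finset.mem_filter]; exact ⟨Finset.mem_univ _, hcase⟩
      have hAle : v A ≤ v S0 := hS0max A hAF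
      have hAeq : v S0 ≤ v A := le_trans hvS0S hSA
      have hAF' : A ∈ F' := by
        rw [hF', Finset.mem_filter]; exact ⟨hAF, hAeq⟩
      have hcardle : A.card ≤ S.card := hScard A hAF'
      have : A.card = S.card + 1 := Finset.card_insert_of_notMem hgS
      omega
    · push_neg at hcase
      have hBF : Aᶜ ∈ F := by
        rw [hF, Finset.mem_filter]
        refine ⟨Finset.mem_univ _, ?_⟩
        rw [compl_compl]
        exact le_of_lt hcase
      have hBle : v Aᶜ ≤ v S0 := hS0max _ hBF
      rw [hAc] at hBle
      -- hcon : v S < v (Sᶜ.erase g)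
      have : v (Sᶜ.erase g) ≤ v S := hBle.trans (le_of_eq hvS.symm)
      linarith
  · intro g hg
    have h1 : v (S.erase g) ≤ v S := mono _ _ (Finset.erase_subset _ _)
    exact le_trans h1 hSle
end

section
/- Suppose X is an EFX orientation on a multigraph (each allocated edge is assigned to one of its endpoints, and the allocation satisfies EFX, where each vertex values only its incident edges). If some vertex i is envied, then there is a unique vertex j that envies i, and every edge in X_i is incident to j. -/
/-- In an EFX orientation on a multigraph, an envied vertex `i` is envied by a
unique vertex `j`, and every edge allocated to `i` is incident to `j`. -/
theorem envied_unique_envier {V E : Type*} [Fintype V] [Fintype E]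
    [DecidableEq V] [DecidableEq E]
    (ends : E → Sym2 V) (v : V → Finset E → ℝ)
    (mono : ∀ u (S T : Finset E), S ⊆ T → v u S ≤ v u T)
    (norm : ∀ u, v u ∅ = 0)
    (irr : ∀ u (S : Finset E) (g : E), u ∉ ends g → v u (insert g S) = v u S)
    (X : V → Finset E)
    (hdisj : ∀ u w, u ≠ w → Disjoint (X u) (X w))
    (orient : ∀ u, ∀ e ∈ X u, u ∈ ends e)
    (efx : ∀ u w, ∀ g ∈ X w, v u (X u) ≥ v u ((X w).erase g))
    (i : V) (hi : ∃ j, v j (X j) < v j (X i)) :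
    ∃ j, (v j (X j) < v j (X i)) ∧ (∀ e ∈ X i, j ∈ ends e) ∧
      ∀ j', v j' (X j') < v j' (X i) → j' = j := by
  obtain ⟨j, hj⟩ := hi
  have incident : ∀ (k : V), v k (X k) < v k (X i) → ∀ e ∈ X i, k ∈ ends e := by
    intro k hk e he
    by_contra hne
    have heq : v k (X i) = v k ((X i).erase e) := by
      conv_lhs => rw [← Finset.insert_erase he]
      exact irr k _ e hne
    have hefx := efx k i e he
    linarith
  have hji : j ≠ i := fun h => absurd hj (by rw [h]; exact lt_irrefl _)
  have hnonempty : (X i).Nonempty := by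
    by_contra h
    rw [Finset.not_nonempty_iff_eq_empty] at h
    rw [h, norm] at hj
    have := mono j ∅ (X j) (Finset.empty_subset _)
    rw [norm] at this
    linarith
  refine ⟨j, hj, incident j hj, ?_⟩
  intro j' hj'
  have hj'i : j' ≠ i := fun h => absurd hj' (by rw [h]; exact lt_irrefl _)
  obtain ⟨e, he⟩ := hnonempty
  have h1 := incident j hj e he
  have h2 := incident j' hj' e he
  have hi' := orient i e he
  have hie : ends e = s(i, j) := ((Sym2.mem_and_mem_iff (Ne.symm hji)).mp ⟨hi', h1⟩)
  rw [hie, Sym2.mem_iff] at h2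
  tauto
end

section
/- Let H = (A ∪ B, E_H) be a bipartite graph in which every vertex of A has degree exactly 2 and every vertex of B has degree at most 2, and where for each a ∈ A one of its two incident edges has weight 1 and the other weight 0. Then any maximum-weight matching among matchings saturating A has total weight at least ⌈|A|/2⌉; equivalently, at least ⌈|A|/2⌉ vertices of A are matched along their weight-1 edge. -/
open Finset
namespace MaxMatchAux


lemma sum_range_add' (F : ℕ → ℕ) (a b : ℕ) :
    ∑ i ∈ range (a + b), F i = ∑ i ∈ range a, F i + ∑ j ∈ range b, F (a + j) := by
  induction b with
  | zero => simp
  | succ b ih =>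
      rw [show a + (b+1) = (a+b)+1 from rfl, sum_range_succ, ih, sum_range_succ, add_assoc]

variable {A B : Type*} [DecidableEq B]

def altc (e1 e0 f : A → B) (a : A) : B := if f a = e1 a then e0 a else e1 a

lemma altc_ne (e1 e0 f : A → B) (hne : ∀ a, e1 a ≠ e0 a) (a : A) :
    altc e1 e0 f a ≠ f a := by
  unfold altc; split
  · next h => rw [h]; exact fun hh => (hne a) hh.symm
  · next h => exact fun hh => h hh.symm

lemma altc_valid (e1 e0 f : A → B) (a : A) :
    altc e1 e0 f a = e1 a ∨ altc e1 e0 f a = e0 a := by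
  unfold altc; split
  · right; rfl
  · left; rfl

lemma back_unique {A B : Type*} [Fintype A] [DecidableEq A] [DecidableEq B]
    (e1 e0 f : A → B) (hne : ∀ a, e1 a ≠ e0 a)
    (hdeg : ∀ b : B, (Finset.univ.filter (fun a => e1 a = b ∨ e0 a = b)).card ≤ 2)
    (hfe : ∀ a, f a = e1 a ∨ f a = e0 a)
    {a1 a2 c1 c2 : A} (h1 : f c1 = altc e1 e0 f a1) (h2 : f c2 = altc e1 e0 f a2)
    (hc : c1 = c2) : a1 = a2 := by
  subst hc
  by_contra hne12
  set b := f c1 with hb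
  have m1 : e1 a1 = b ∨ e0 a1 = b := by
    rcases altc_valid e1 e0 f a1 with h | h
    · left; rw [← h, ← h1]
    · right; rw [← h, ← h1]
  have m2 : e1 a2 = b ∨ e0 a2 = b := by
    rcases altc_valid e1 e0 f a2 with h | h
    · left; rw [← h, ← h2]
    · right; rw [← h, ← h2]
  have mc : e1 c1 = b ∨ e0 c1 = b := by
    rcases hfe c1 with h | h
    · left; rw [← h]
    · right; rw [← h]
  have hca1 : c1 ≠ a1 := by
    intro h; rw [hb, h] at h1; exact altc_ne e1 e0 f hne a1 h1.symm
  have hca2 : c1 ≠ a2 := by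
    intro h; rw [hb, h] at h2; exact altc_ne e1 e0 f hne a2 h2.symm
  have hsub : ({a1, a2, c1} : Finset A) ⊆ Finset.univ.filter (fun a => e1 a = b ∨ e0 a = b) := by
    intro x hx
    simp only [mem_insert, mem_singleton] at hx
    rcases hx with rfl | rfl | rfl <;> simp [m1, m2, mc]
  have hcard : ({a1, a2, c1} : Finset A).card = 3 := by
    rw [card_insert_of_notMem (by simp [hne12, Ne.symm hca1]),
        card_insert_of_notMem (by simp [Ne.symm hca2]), card_singleton]
  have := (Finset.card_le_card hsub).trans (hdeg b)
  omega

lemma canc {A B : Type*} [Fintype A] [DecidableEq A] [DecidableEq B]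
    (e1 e0 f : A → B) (hne : ∀ a, e1 a ≠ e0 a)
    (hdeg : ∀ b : B, (Finset.univ.filter (fun a => e1 a = b ∨ e0 a = b)).card ≤ 2)
    (hfe : ∀ a, f a = e1 a ∨ f a = e0 a) (σ : A → A) :
    ∀ (k : ℕ) (u u' : A) (d : ℕ),
      (∀ i < k, f (σ^[i+1] u) = altc e1 e0 f (σ^[i] u)) →
      (∀ i < k + d, f (σ^[i+1] u') = altc e1 e0 f (σ^[i] u')) →
      σ^[k] u = σ^[k+d] u' → u = σ^[d] u' := by
  intro k
  induction k with
  | zero => intro u u' d _ _ h; simpa using h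
  | succ k ih =>
      intro u u' d hr1 hr2 h
      have e1' : f (σ^[k+1] u) = altc e1 e0 f (σ^[k] u) := hr1 k (by omega)
      have e2' : f (σ^[(k+d)+1] u') = altc e1 e0 f (σ^[k+d] u') := hr2 (k+d) (by omega)
      have hc : σ^[k+1] u = σ^[(k+d)+1] u' := by
        rw [show (k+d)+1 = k+1+d by omega]; exact h
      have := back_unique e1 e0 f hne hdeg hfe e1' e2' hc
      exact ih u u' d (fun i hi => hr1 i (by omega)) (fun i hi => hr2 i (by omega)) this


lemma altc_eq_e1 (e1 e0 f : A → B) (hne : ∀ a, e1 a ≠ e0 a) (a : A) :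
    altc e1 e0 f a = e1 a ↔ ¬ f a = e1 a := by
  unfold altc; split
  · next h => simp only [h, not_true, iff_false]; exact fun hh => (hne a) hh.symm
  · next h => simp [h]

lemma flip {A B : Type*} [Fintype A] [DecidableEq A] [DecidableEq B]
    (e1 e0 f : A → B) (hne : ∀ a, e1 a ≠ e0 a)
    (hf : Function.Injective f) (hfe : ∀ a, f a = e1 a ∨ f a = e0 a)
    (hmax : ∀ g : A → B, Function.Injective g → (∀ a, g a = e1 a ∨ g a = e0 a) →
      (Finset.univ.filter (fun a => g a = e1 a)).card ≤
        (Finset.univ.filter (fun a => f a = e1 a)).card)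
    (D : Finset A)
    (h1 : ∀ a ∈ D, ∀ b ∈ D, altc e1 e0 f a = altc e1 e0 f b → a = b)
    (h2 : ∀ a ∈ D, ∀ y, y ∉ D → altc e1 e0 f a ≠ f y)
    (h3 : (D.filter fun a => f a = e1 a).card < (D.filter fun a => ¬ f a = e1 a).card) :
    False := by
  set g : A → B := fun a => if a ∈ D then altc e1 e0 f a else f a with hg
  have hginj : Function.Injective g := by
    intro a b hab
    simp only [hg] at hab
    by_cases ha : a ∈ D <;> by_cases hb : b ∈ D <;>
      simp only [ha, hb, if_pos, if_neg, if_true, if_false] at hab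
    · exact h1 a ha b hb hab
    · exact absurd hab (h2 a ha b hb)
    · exact absurd hab.symm (h2 b hb a ha)
    · exact hf hab
  have hgval : ∀ a, g a = e1 a ∨ g a = e0 a := by
    intro a
    by_cases ha : a ∈ D
    · simp only [hg, ha, if_true]; exact altc_valid e1 e0 f a
    · simp only [hg, ha, if_false]; exact hfe a
  have key := hmax g hginj hgval
  have split_card : ∀ (h : A → B),
      (Finset.univ.filter fun a => h a = e1 a).card =
        (D.filter fun a => h a = e1 a).card +
          ((Finset.univ \ D).filter fun a => h a = e1 a).card := by
    intro h
    rw [← card_union_of_disjoint (disjoint_filter_filter sdiff_disjoint.symm),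
        ← filter_union, union_sdiff_of_subset (subset_univ D)]
  rw [split_card g, split_card f] at key
  have e1g : (D.filter fun a => g a = e1 a) = D.filter fun a => ¬ f a = e1 a := by
    apply filter_congr
    intro a ha
    simp only [hg, ha, if_true]
    exact altc_eq_e1 e1 e0 f hne a
  have e2g : ((Finset.univ \ D).filter fun a => g a = e1 a)
      = (Finset.univ \ D).filter fun a => f a = e1 a := by
    apply filter_congr
    intro a ha
    simp only [hg, (mem_sdiff.mp ha).2, if_false]
  rw [e1g, e2g] at key
  omega


def nTc (e1 f : A → B) (σ : A → A) (s : A) (k : ℕ) : ℕ :=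
  ∑ i ∈ range (k+1), (if f (σ^[i] s) = e1 (σ^[i] s) then 1 else 0)

def nSc (e1 f : A → B) (σ : A → A) (s : A) (k : ℕ) : ℕ :=
  ∑ i ∈ range (k+1), (if f (σ^[i] s) = e1 (σ^[i] s) then 0 else 1)

abbrev Qc (e1 e0 f : A → B) (σ : A → A) (s : A) (k : ℕ) : Prop :=
  1 ≤ k ∧ (∀ i < k, f (σ^[i+1] s) = altc e1 e0 f (σ^[i] s)) ∧
    nSc e1 f σ s k ≤ nTc e1 f σ s k

lemma lemA {A B : Type*} [Fintype A] [DecidableEq A] [DecidableEq B]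
    (e1 e0 f : A → B) (hne : ∀ a, e1 a ≠ e0 a)
    (hdeg : ∀ b : B, (Finset.univ.filter (fun a => e1 a = b ∨ e0 a = b)).card ≤ 2)
    (hf : Function.Injective f) (hfe : ∀ a, f a = e1 a ∨ f a = e0 a)
    (hmax : ∀ g : A → B, Function.Injective g → (∀ a, g a = e1 a ∨ g a = e0 a) →
      (Finset.univ.filter (fun a => g a = e1 a)).card ≤
        (Finset.univ.filter (fun a => f a = e1 a)).card)
    (σ : A → A)
    (hσ : ∀ a, (∃ c, f c = altc e1 e0 f a) → f (σ a) = altc e1 e0 f a)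
    (s : A) (hs : ¬ f s = e1 s) : ∃ k, Qc e1 e0 f σ s k := by
  by_contra hQ
  push_neg at hQ
  have hno : ∀ k, (∀ i < k, f (σ^[i+1] s) = altc e1 e0 f (σ^[i] s)) →
      nTc e1 f σ s k < nSc e1 f σ s k := by
    intro k hreal
    rcases Nat.eq_zero_or_pos k with h0 | h1
    · subst h0
      unfold nTc nSc
      rw [sum_range_one, sum_range_one]
      simp [hs]
    · by_contra h
      push_neg at h
      exact hQ k ⟨h1, hreal, h⟩
  by_cases hall : ∀ i, ∃ c, f c = altc e1 e0 f (σ^[i] s)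
  · -- all steps real: the orbit is eventually cyclic through s
    have hreal : ∀ i, f (σ^[i+1] s) = altc e1 e0 f (σ^[i] s) := fun i => by
      rw [Function.iterate_succ_apply']; exact hσ _ (hall i)
    obtain ⟨i, j, hij, hxij⟩ := Finite.exists_ne_map_eq_of_infinite (fun n : ℕ => σ^[n] s)
    have hper : ∃ p, 0 < p ∧ σ^[p] s = s := by
      have key : ∀ i j : ℕ, i < j → σ^[i] s = σ^[j] s → ∃ p, 0 < p ∧ σ^[p] s = s := by
        intro i j hlt he
        refine ⟨j - i, by omega, ?_⟩
        have := canc e1 e0 f hne hdeg hfe σ i s s (j - i)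
          (fun t _ => hreal t) (fun t _ => hreal t)
          (by rw [show i + (j - i) = j by omega]; exact he)
        exact this.symm
      rcases lt_or_gt_of_ne hij with h | h
      · exact key i j h hxij
      · exact key j i h hxij.symm
    set p := Nat.find hper with hpdef
    have hp := Nat.find_spec hper
    have hxinj : ∀ i ∈ range p, ∀ j ∈ range p, σ^[i] s = σ^[j] s → i = j := by
      have key : ∀ i j : ℕ, i < j → j < p → σ^[i] s = σ^[j] s → False := by
        intro i j hlt hjp he
        have hs' := canc e1 e0 f hne hdeg hfe σ i s s (j - i)
          (fun t _ => hreal t) (fun t _ => hreal t)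
          (by rw [show i + (j - i) = j by omega]; exact he)
        exact Nat.find_min hper (show j - i < p by omega) ⟨by omega, hs'.symm⟩
      intro i hi j hj he
      rcases Nat.lt_trichotomy i j with h | h | h
      · exact (key i j h (mem_range.mp hj) he).elim
      · exact h
      · exact (key j i h (mem_range.mp hi) he.symm).elim
    set D := (range p).image (fun n => σ^[n] s) with hD
    apply flip e1 e0 f hne hf hfe hmax D
    · intro a ha b hb hab
      obtain ⟨i, hi, rfl⟩ := mem_image.mp ha
      obtain ⟨j, hj, rfl⟩ := mem_image.mp hb
      exact back_unique e1 e0 f hne hdeg hfe (hreal i) ((hreal i).trans hab) rfl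
    · intro a ha y hy hay
      obtain ⟨i, hi, rfl⟩ := mem_image.mp ha
      have hyx : σ^[i+1] s = y := hf ((hreal i).trans hay)
      apply hy
      rw [← hyx]
      rcases Nat.lt_or_ge (i+1) p with h | h
      · exact mem_image.mpr ⟨i+1, mem_range.mpr h, rfl⟩
      · have hip : i + 1 = p := by have := mem_range.mp hi; omega
        rw [hip, hp.2]
        exact mem_image.mpr ⟨0, mem_range.mpr hp.1, rfl⟩
    · have hp1 : p - 1 + 1 = p := by omega
      have hc1 : (D.filter fun a => f a = e1 a).card = nTc e1 f σ s (p-1) := by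
        rw [card_filter, hD, sum_image hxinj]
        unfold nTc
        rw [hp1]
      have hc2 : (D.filter fun a => ¬ f a = e1 a).card = nSc e1 f σ s (p-1) := by
        rw [card_filter, hD, sum_image hxinj]
        unfold nSc
        rw [hp1]
        exact sum_congr rfl (fun i _ => by
          by_cases h : f (σ^[i] s) = e1 (σ^[i] s) <;> simp [h])
      rw [hc1, hc2]
      exact hno (p-1) (fun i _ => hreal i)
  · -- a free end exists
    push_neg at hall
    have hm := Nat.find_spec hall
    set m := Nat.find hall with hmdef
    have hmmin : ∀ i < m, ∃ c, f c = altc e1 e0 f (σ^[i] s) := by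
      intro i hi
      have := Nat.find_min hall hi
      push_neg at this
      exact this
    have hreal : ∀ i < m, f (σ^[i+1] s) = altc e1 e0 f (σ^[i] s) := fun i hi => by
      rw [Function.iterate_succ_apply']; exact hσ _ (hmmin i hi)
    have hxinj : ∀ i ∈ range (m+1), ∀ j ∈ range (m+1), σ^[i] s = σ^[j] s → i = j := by
      have key : ∀ i j : ℕ, i < j → j ≤ m → σ^[i] s = σ^[j] s → False := by
        intro i j hlt hjm he
        have hs' := canc e1 e0 f hne hdeg hfe σ i s s (j - i)
          (fun t ht => hreal t (by omega)) (fun t ht => hreal t (by omega))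
          (by rw [show i + (j - i) = j by omega]; exact he)
        have hm2 : σ^[m] s = σ^[m - (j-i)] s := by
          conv_lhs => rw [show m = (m - (j-i)) + (j-i) by omega]
          rw [Function.iterate_add_apply, ← hs']
        have hr := hreal (m - (j-i)) (by omega)
        exact hm _ (by rw [hm2]; exact hr)
      intro i hi j hj he
      rcases Nat.lt_trichotomy i j with h | h | h
      · exact (key i j h (by have := mem_range.mp hj; omega) he).elim
      · exact h
      · exact (key j i h (by have := mem_range.mp hi; omega) he.symm).elim
    set D := (range (m+1)).image (fun n => σ^[n] s) with hD
    apply flip e1 e0 f hne hf hfe hmax D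
    · intro a ha b hb hab
      obtain ⟨i, hi, rfl⟩ := mem_image.mp ha
      obtain ⟨j, hj, rfl⟩ := mem_image.mp hb
      have him := mem_range.mp hi
      have hjm := mem_range.mp hj
      rcases Nat.lt_or_ge i m with h | h
      · exact back_unique e1 e0 f hne hdeg hfe (hreal i h) ((hreal i h).trans hab) rfl
      · have hi' : i = m := by omega
        rcases Nat.lt_or_ge j m with h2 | h2
        · exact (back_unique e1 e0 f hne hdeg hfe (hreal j h2)
            ((hreal j h2).trans hab.symm) rfl).symm
        · have hj' : j = m := by omega
          rw [hi', hj']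
    · intro a ha y hy hay
      obtain ⟨i, hi, rfl⟩ := mem_image.mp ha
      have him := mem_range.mp hi
      rcases Nat.lt_or_ge i m with h | h
      · have hyx : σ^[i+1] s = y := hf ((hreal i h).trans hay)
        exact hy (by rw [← hyx]; exact mem_image.mpr ⟨i+1, mem_range.mpr (by omega), rfl⟩)
      · have hi' : i = m := by omega
        rw [hi'] at hay
        exact hm y hay.symm
    · have hc1 : (D.filter fun a => f a = e1 a).card = nTc e1 f σ s m := by
        rw [card_filter, hD, sum_image hxinj]
        rfl
      have hc2 : (D.filter fun a => ¬ f a = e1 a).card = nSc e1 f σ s m := by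
        rw [card_filter, hD, sum_image hxinj]
        exact sum_congr rfl (fun i _ => by
          by_cases h : f (σ^[i] s) = e1 (σ^[i] s) <;> simp [h])
      rw [hc1, hc2]
      exact hno m hreal


end MaxMatchAux

/-- In a bipartite graph where each left vertex `a` has exactly two incident
edges, one of weight 1 (to `e1 a`) and one of weight 0 (to `e0 a`), and every
right vertex has degree at most 2, any maximum-weight matching saturating the
left side has weight at least `⌈|A|/2⌉`. -/
theorem max_matching_weight {A B : Type*} [Fintype A] [Fintype B]
    [DecidableEq A] [DecidableEq B]
    (e1 e0 : A → B) (hne : ∀ a, e1 a ≠ e0 a)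
    (hdeg : ∀ b : B, (Finset.univ.filter (fun a => e1 a = b ∨ e0 a = b)).card ≤ 2)
    (f : A → B) (hf : Function.Injective f)
    (hfe : ∀ a, f a = e1 a ∨ f a = e0 a)
    (hmax : ∀ g : A → B, Function.Injective g → (∀ a, g a = e1 a ∨ g a = e0 a) →
      (Finset.univ.filter (fun a => g a = e1 a)).card ≤
        (Finset.univ.filter (fun a => f a = e1 a)).card) :
    (Fintype.card A + 1) / 2 ≤ (Finset.univ.filter (fun a => f a = e1 a)).card := by
  have hex : ∀ a : A, ∃ a', (∃ c, f c = MaxMatchAux.altc e1 e0 f a) →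
      f a' = MaxMatchAux.altc e1 e0 f a := by
    intro a
    by_cases h : ∃ c, f c = MaxMatchAux.altc e1 e0 f a
    · exact ⟨h.choose, fun _ => h.choose_spec⟩
    · exact ⟨a, fun hc => absurd hc h⟩
  choose σ hσ using hex
  have main : ∀ s : A, ¬ f s = e1 s → ∃ k, MaxMatchAux.Qc e1 e0 f σ s k :=
    fun s hs => MaxMatchAux.lemA e1 e0 f hne hdeg hf hfe hmax σ hσ s hs
  have minfacts : ∀ s (hs : ¬ f s = e1 s),
      f (σ^[Nat.find (main s hs)] s) = e1 (σ^[Nat.find (main s hs)] s) ∧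
      MaxMatchAux.nSc e1 f σ s (Nat.find (main s hs)) =
        MaxMatchAux.nTc e1 f σ s (Nat.find (main s hs)) := by
    intro s hs
    have hspec := Nat.find_spec (main s hs)
    set k := Nat.find (main s hs) with hk
    obtain ⟨hk1, hreal, hle⟩ := hspec
    have hprev : MaxMatchAux.nTc e1 f σ s (k-1) < MaxMatchAux.nSc e1 f σ s (k-1) := by
      rcases Nat.lt_or_ge 1 k with h | h
      · have hmin := Nat.find_min (main s hs) (show k - 1 < k by omega)
        by_contra hc
        push_neg at hc
        exact hmin ⟨by omega, fun i hi => hreal i (by omega), hc⟩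
      · have hk1' : k = 1 := by omega
        rw [hk1']
        show MaxMatchAux.nTc e1 f σ s 0 < MaxMatchAux.nSc e1 f σ s 0
        unfold MaxMatchAux.nTc MaxMatchAux.nSc
        rw [Finset.sum_range_one, Finset.sum_range_one]
        simp [hs]
    have hsT : MaxMatchAux.nTc e1 f σ s k = MaxMatchAux.nTc e1 f σ s (k-1) +
        (if f (σ^[k] s) = e1 (σ^[k] s) then 1 else 0) := by
      conv_lhs => rw [show k = (k-1)+1 by omega]
      unfold MaxMatchAux.nTc
      rw [Finset.sum_range_succ, show k - 1 + 1 = k by omega]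
    have hsS : MaxMatchAux.nSc e1 f σ s k = MaxMatchAux.nSc e1 f σ s (k-1) +
        (if f (σ^[k] s) = e1 (σ^[k] s) then 0 else 1) := by
      conv_lhs => rw [show k = (k-1)+1 by omega]
      unfold MaxMatchAux.nSc
      rw [Finset.sum_range_succ, show k - 1 + 1 = k by omega]
    by_cases hT : f (σ^[k] s) = e1 (σ^[k] s)
    · rw [if_pos hT] at hsT
      rw [if_pos hT] at hsS
      exact ⟨hT, by omega⟩
    · rw [if_neg hT] at hsT
      rw [if_neg hT] at hsS
      omega
  have sym : ∀ s (hs : ¬ f s = e1 s) s' (hs' : ¬ f s' = e1 s'),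
      Nat.find (main s hs) ≤ Nat.find (main s' hs') →
      σ^[Nat.find (main s hs)] s = σ^[Nat.find (main s' hs')] s' → s = s' := by
    intro s hs s' hs' hkk heq
    have hspec := Nat.find_spec (main s hs)
    have hspec' := Nat.find_spec (main s' hs')
    have hBs := (minfacts s hs).2
    set k := Nat.find (main s hs) with hk
    set k' := Nat.find (main s' hs') with hk'
    obtain ⟨hk1, hreal, hle⟩ := hspec
    obtain ⟨hk1', hreal', hle'⟩ := hspec'
    set d := k' - k with hd
    have hss' : s = σ^[d] s' :=
      MaxMatchAux.canc e1 e0 f hne hdeg hfe σ k s s' d hreal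
        (fun i hi => hreal' i (by omega))
        (by rw [show k + d = k' by omega]; exact heq)
    rcases Nat.eq_zero_or_pos d with h0 | h1
    · rw [h0] at hss'
      simpa using hss'
    · exfalso
      have hshift : ∀ (F : A → ℕ),
          ∑ i ∈ Finset.range (k'+1), F (σ^[i] s') =
            ∑ i ∈ Finset.range d, F (σ^[i] s') +
              ∑ i ∈ Finset.range (k+1), F (σ^[i] s) := by
        intro F
        rw [show k' + 1 = d + (k+1) by omega, MaxMatchAux.sum_range_add']
        congr 1
        exact Finset.sum_congr rfl (fun j _ => by
          rw [add_comm d j, Function.iterate_add_apply, ← hss'])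
      have hd1 : MaxMatchAux.nTc e1 f σ s' (d-1) < MaxMatchAux.nSc e1 f σ s' (d-1) := by
        rcases Nat.lt_or_ge 1 d with h | h
        · have hmin := Nat.find_min (main s' hs') (show d - 1 < k' by omega)
          by_contra hc
          push_neg at hc
          exact hmin ⟨by omega, fun i hi => hreal' i (by omega), hc⟩
        · have hd1' : d = 1 := by omega
          rw [hd1']
          show MaxMatchAux.nTc e1 f σ s' 0 < MaxMatchAux.nSc e1 f σ s' 0
          unfold MaxMatchAux.nTc MaxMatchAux.nSc
          rw [Finset.sum_range_one, Finset.sum_range_one]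
          simp [hs']
      have eT : MaxMatchAux.nTc e1 f σ s' k' =
          MaxMatchAux.nTc e1 f σ s' (d-1) + MaxMatchAux.nTc e1 f σ s k := by
        unfold MaxMatchAux.nTc
        rw [show d - 1 + 1 = d by omega]
        exact hshift (fun a => if f a = e1 a then 1 else 0)
      have eS : MaxMatchAux.nSc e1 f σ s' k' =
          MaxMatchAux.nSc e1 f σ s' (d-1) + MaxMatchAux.nSc e1 f σ s k := by
        unfold MaxMatchAux.nSc
        rw [show d - 1 + 1 = d by omega]
        exact hshift (fun a => if f a = e1 a then 0 else 1)
      omega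
  have hcard : (Finset.univ.filter (fun a => ¬ f a = e1 a)).card ≤
      (Finset.univ.filter (fun a => f a = e1 a)).card := by
    apply Finset.card_le_card_of_injOn
      (fun s => if h : ¬ f s = e1 s then σ^[Nat.find (main s h)] s else s)
    · intro s hsP
      have hs : ¬ f s = e1 s := (Finset.mem_filter.mp hsP).2
      simp only [dif_pos hs]
      exact Finset.mem_filter.mpr ⟨Finset.mem_univ _, (minfacts s hs).1⟩
    · intro s hsP s' hsP' heq
      have hs : ¬ f s = e1 s := (Finset.mem_filter.mp hsP).2
      have hs' : ¬ f s' = e1 s' := (Finset.mem_filter.mp hsP').2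
      simp only [dif_pos hs, dif_pos hs'] at heq
      rcases le_total (Nat.find (main s hs)) (Nat.find (main s' hs')) with h | h
      · exact sym s hs s' hs' h heq
      · exact (sym s' hs' s hs h heq.symm).symm
  have hsum := Finset.card_filter_add_card_filter_not
    (s := (Finset.univ : Finset A)) (p := fun a => f a = e1 a)
  rw [Finset.card_univ] at hsum
  omega
end

section
/- Consider two agents with monotone normalized valuations v_1, v_2 over a finite set M. Let (P1, P2) be an EFX-cut of M for agent 1, and allocate to agent 2 its more preferred bundle among P1, P2 and to agent 1 the remaining bundle. Then the resulting allocation of M to the two agents is EFX: each agent a and each good g in the other agent's bundle B satisfies v_a(own bundle) ≥ v_a(B \ {g}). -/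
/-- Correctness of the cut-and-choose protocol: if `(P1, P2)` is an EFX-cut for
agent 1 and agent 2 receives its preferred bundle among the two (agent 1 the
remaining one), then the resulting allocation is EFX. -/
theorem cut_and_choose_EFX {M : Type*} [Fintype M] [DecidableEq M]
    (v1 v2 : Finset M → ℝ)
    (mono1 : ∀ S T : Finset M, S ⊆ T → v1 S ≤ v1 T) (norm1 : v1 ∅ = 0)
    (mono2 : ∀ S T : Finset M, S ⊆ T → v2 S ≤ v2 T) (norm2 : v2 ∅ = 0)
    (P1 P2 : Finset M) (hdisj : Disjoint P1 P2) (hunion : P1 ∪ P2 = Finset.univ)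
    (hcut1 : ∀ g ∈ P2, v1 P1 ≥ v1 (P2.erase g))
    (hcut2 : ∀ g ∈ P1, v1 P2 ≥ v1 (P1.erase g))
    (A1 A2 : Finset M)
    (hchoose : (A2 = P1 ∧ A1 = P2 ∧ v2 P1 ≥ v2 P2) ∨
               (A2 = P2 ∧ A1 = P1 ∧ v2 P2 ≥ v2 P1)) :
    (∀ g ∈ A2, v1 A1 ≥ v1 (A2.erase g)) ∧
    (∀ g ∈ A1, v2 A2 ≥ v2 (A1.erase g)) := by
  rcases hchoose with ⟨h2, h1, hv⟩ | ⟨h2, h1, hv⟩ <;> subst h1 <;> subst h2 <;>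
    refine ⟨fun g hg => ?_, fun g hg => le_trans (mono2 _ _ (Finset.erase_subset g _)) hv⟩
  · exact hcut2 g hg
  · exact hcut1 g hg
end

section
/- Let X be an EFX orientation on a multigraph in which a vertex j envies vertex i. Then every edge of X_i has endpoints exactly {i, j} (i.e., X_i consists solely of edges parallel between i and j), and in particular i and j are adjacent. -/
/-- In an EFX orientation on a multigraph, if `j` envies `i`, then every edge
of `X i` has endpoints exactly `{i, j}` (it is parallel between `i` and `j`);
in particular `i` and `j` are adjacent. -/
theorem envied_bundle_parallel {V E : Type*} [DecidableEq V] [DecidableEq E]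
    (ends : E → Sym2 V) (v : V → Finset E → ℝ)
    (mono : ∀ u (S T : Finset E), S ⊆ T → v u S ≤ v u T)
    (norm : ∀ u, v u ∅ = 0)
    (irr : ∀ u (S : Finset E) (g : E), u ∉ ends g → v u (insert g S) = v u S)
    (X : V → Finset E)
    (orient : ∀ u, ∀ e ∈ X u, u ∈ ends e)
    (efx : ∀ u w, ∀ g ∈ X w, v u (X u) ≥ v u ((X w).erase g))
    (i j : V) (henvy : v j (X j) < v j (X i)) :
    (∀ e ∈ X i, ends e = s(i, j)) ∧ j ≠ i ∧ ∃ e : E, ends e = s(i, j) := by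
  have hji : j ≠ i := by
    rintro rfl; exact lt_irrefl _ henvy
  have hkey : ∀ e ∈ X i, ends e = s(i, j) := by
    intro e he
    have hi : i ∈ ends e := orient i e he
    have hj : j ∈ ends e := by
      by_contra hj
      have h1 : v j (insert e ((X i).erase e)) = v j ((X i).erase e) := irr j _ e hj
      rw [Finset.insert_erase he] at h1
      have := efx j i e he
      rw [← h1] at this
      exact absurd henvy (not_lt.mpr this)
    exact (Sym2.mem_and_mem_iff hji.symm).mp ⟨hi, hj⟩
  refine ⟨hkey, hji, ?_⟩
  have hne : (X i).Nonempty := by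
    by_contra h
    rw [Finset.not_nonempty_iff_eq_empty] at h
    rw [h, norm] at henvy
    exact absurd henvy (not_lt.mpr ((norm j) ▸ mono j ∅ (X j) (Finset.empty_subset _)))
  obtain ⟨e, he⟩ := hne
  exact ⟨e, hkey e he⟩
end
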